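/- For independent Boolean random variables evaluation is sound for linear formulas: if φ is a formula over ∧, ∨, atoms in which each atom occurs at most once, ρ assigns to each atom an independent Boolean random variable, and each atom A satisfies P(ρ(A) = true) ∈ [t_A, 1−f_A] with (t_A,f_A) ∈ C, then P(⟦φ⟧ρ = true) ∈ [t, 1−f] where (t,f) is the confidence of φ computed compositionally using the conjunction operation (t,f),(t',f') ↦ (t·t', f+f'−f·f') and disjunction operation (t,f),(t',f') ↦ (t+t'−t·t', f·f'). -/

import Mathlib

open MeasureTheory ProbabilityTheory

/-- Propositional formulas over atoms ℕ, conjunction and disjunction. -/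
inductive Form where
  | atom : ℕ → Form
  | and  : Form → Form → Form
  | or   : Form → Form → Form

/-- The list of atoms occurring in a formula (with multiplicity). -/
def Form.atomList : Form → List ℕ
  | .atom A => [A]
  | .and φ ψ => φ.atomList ++ ψ.atomList
  | .or φ ψ => φ.atomList ++ ψ.atomList

/-- A formula is linear when each atom occurs at most once. -/
def Form.Linear (φ : Form) : Prop := φ.atomList.Nodup

/-- Pointwise Boolean evaluation under a context. -/
def Form.eval {Ω : Type*} (ρ : ℕ → Ω → Bool) : Form → Ω → Bool
  | .atom A, ω => ρ A ω
  | .and φ ψ, ω => φ.eval ρ ω && ψ.eval ρ ω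
  | .or φ ψ, ω => φ.eval ρ ω || ψ.eval ρ ω

/-- Compositional confidence evaluation. -/
def Form.evalConf (c : ℕ → ℝ × ℝ) : Form → ℝ × ℝ
  | .atom A => c A
  | .and φ ψ => ((φ.evalConf c).1 * (ψ.evalConf c).1,
      (φ.evalConf c).2 + (ψ.evalConf c).2 - (φ.evalConf c).2 * (ψ.evalConf c).2)
  | .or φ ψ => ((φ.evalConf c).1 + (ψ.evalConf c).1 - (φ.evalConf c).1 * (ψ.evalConf c).1,
      (φ.evalConf c).2 * (ψ.evalConf c).2)

open Set

/-! Induction on the formula. Linearity makes the two subformulas of a connective depend on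
disjoint sets of atoms, hence be independent, so `P(φ ∧ ψ) = p q` and `P(φ ∨ ψ) = p + q - p q`.
Since `1 - (f + f' - f f') = (1 - f)(1 - f')` and `1 - (t + t' - t t') = (1 - t)(1 - t')`, both
bounds then follow from the monotonicity of the product on nonnegative intervals, applied to
`p, q` for `∧` and to `1 - p, 1 - q` for `∨`; the nonnegativity needed there holds because the
set `C` of confidences is closed under both operations. -/

lemma mul_mem_Icc_mul {α : Type*} [Semiring α] [PartialOrder α] [IsOrderedRing α]
    {a b l l' u u' : α} (ha : a ∈ Icc l u) (hb : b ∈ Icc l' u') (hl : 0 ≤ l) (hl' : 0 ≤ l') :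
    a * b ∈ Icc (l * l') (u * u') :=
  ⟨mul_le_mul ha.1 hb.1 hl' (hl.trans ha.1),
    mul_le_mul ha.2 hb.2 (hl'.trans hb.1) ((hl.trans ha.1).trans ha.2)⟩

section Confidence

variable {p q : ℝ} {x y : ℝ × ℝ}

lemma mul_mem_Icc_confAnd (hp : p ∈ Icc x.1 (1 - x.2)) (hq : q ∈ Icc y.1 (1 - y.2))
    (hx : 0 ≤ x.1) (hy : 0 ≤ y.1) :
    p * q ∈ Icc (x.1 * y.1) (1 - (x.2 + y.2 - x.2 * y.2)) := by
  rw [show 1 - (x.2 + y.2 - x.2 * y.2) = (1 - x.2) * (1 - y.2) by ring]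
  exact mul_mem_Icc_mul hp hq hx hy

lemma add_sub_mul_mem_Icc_confOr (hp : p ∈ Icc x.1 (1 - x.2)) (hq : q ∈ Icc y.1 (1 - y.2))
    (hx : 0 ≤ x.2) (hy : 0 ≤ y.2) :
    p + q - p * q ∈ Icc (x.1 + y.1 - x.1 * y.1) (1 - x.2 * y.2) := by
  have hp' : 1 - p ∈ Icc x.2 (1 - x.1) := ⟨by linarith [hp.2], by linarith [hp.1]⟩
  have hq' : 1 - q ∈ Icc y.2 (1 - y.1) := ⟨by linarith [hq.2], by linarith [hq.1]⟩
  obtain ⟨hlo, hhi⟩ := mul_mem_Icc_mul hp' hq' hx hy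
  constructor <;> linarith

end Confidence

/-- The set `C` of confidence pairs. -/
def confidences : Set (ℝ × ℝ) := {x | 0 ≤ x.1 ∧ 0 ≤ x.2 ∧ x.1 + x.2 ≤ 1}

namespace Form

lemma evalConf_mem_confidences {c : ℕ → ℝ × ℝ} (hc : ∀ A, c A ∈ confidences) (φ : Form) :
    φ.evalConf c ∈ confidences := by
  induction φ with
  | atom A => exact hc A
  | and φ ψ ihφ ihψ =>
    obtain ⟨h1, h2, h3⟩ := ihφ
    obtain ⟨h4, h5, h6⟩ := ihψ
    simp only [confidences, evalConf, mem_ofPred_eq]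
    exact ⟨by positivity, by nlinarith, by nlinarith⟩
  | or φ ψ ihφ ihψ =>
    obtain ⟨h1, h2, h3⟩ := ihφ
    obtain ⟨h4, h5, h6⟩ := ihψ
    simp only [confidences, evalConf, mem_ofPred_eq]
    exact ⟨by nlinarith, by positivity, by nlinarith⟩

variable {Ω : Type*}

lemma eval_congr {Ω' : Type*} {ρ : ℕ → Ω → Bool} {ρ' : ℕ → Ω' → Bool} {ω : Ω} {ω' : Ω'}
    (φ : Form) (h : ∀ A ∈ φ.atomList, ρ A ω = ρ' A ω') : φ.eval ρ ω = φ.eval ρ' ω' := by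
  induction φ with
  | atom A => exact h A (by simp [atomList])
  | and φ ψ ihφ ihψ =>
    simp only [eval, ihφ fun A hA => h A (by simp [atomList, hA]),
      ihψ fun A hA => h A (by simp [atomList, hA])]
  | or φ ψ ihφ ihψ =>
    simp only [eval, ihφ fun A hA => h A (by simp [atomList, hA]),
      ihψ fun A hA => h A (by simp [atomList, hA])]

lemma exists_eval_eq_comp (ρ : ℕ → Ω → Bool) (φ : Form) {S : Finset ℕ}
    (hS : ∀ A ∈ φ.atomList, A ∈ S) :
    ∃ g : (S → Bool) → Bool, φ.eval ρ = g ∘ fun ω A => ρ A ω :=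
  ⟨φ.eval fun A v => if h : A ∈ S then v ⟨A, h⟩ else false,
    funext fun _ => φ.eval_congr fun A hA => by simp [hS A hA]⟩

variable [MeasurableSpace Ω] {ρ : ℕ → Ω → Bool}

lemma measurable_eval (hmeas : ∀ A, Measurable (ρ A)) (φ : Form) : Measurable (φ.eval ρ) := by
  obtain ⟨g, hg⟩ := φ.exists_eval_eq_comp ρ (S := φ.atomList.toFinset)
    fun _ => List.mem_toFinset.2
  rw [hg]
  exact (measurable_of_countable g).comp (measurable_pi_lambda _ fun A => hmeas A)

lemma indepFun_eval_of_disjoint {μ : Measure Ω} (hmeas : ∀ A, Measurable (ρ A))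
    (hindep : iIndepFun ρ μ) {φ ψ : Form} (h : φ.atomList.Disjoint ψ.atomList) :
    IndepFun (φ.eval ρ) (ψ.eval ρ) μ := by
  obtain ⟨g, hg⟩ := φ.exists_eval_eq_comp ρ (S := φ.atomList.toFinset)
    fun _ => List.mem_toFinset.2
  obtain ⟨g', hg'⟩ := ψ.exists_eval_eq_comp ρ (S := ψ.atomList.toFinset)
    fun _ => List.mem_toFinset.2
  rw [hg, hg']
  exact (hindep.indepFun_finset _ _ (List.disjoint_toFinset_iff_disjoint.2 h) hmeas).comp
    (measurable_of_countable g) (measurable_of_countable g')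

end Form

namespace ProbabilityTheory.IndepFun

variable {Ω : Type*} [MeasurableSpace Ω] {μ : Measure Ω} {X Y : Ω → Bool}

lemma measureReal_and_eq (h : IndepFun X Y μ) :
    μ.real {ω | (X ω && Y ω) = true} = μ.real {ω | X ω = true} * μ.real {ω | Y ω = true} := by
  have := h.measure_inter_preimage_eq_mul {true} {true} (by simp) (by simp)
  simp only [measureReal_def, Bool.and_eq_true, ofPred_and, ← ENNReal.toReal_mul]
  exact congrArg ENNReal.toReal this

lemma measureReal_or_eq [IsFiniteMeasure μ] (h : IndepFun X Y μ) (hY : Measurable Y) :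
    μ.real {ω | (X ω || Y ω) = true} =
      μ.real {ω | X ω = true} + μ.real {ω | Y ω = true} -
        μ.real {ω | X ω = true} * μ.real {ω | Y ω = true} := by
  have hunion := measureReal_union_add_inter (μ := μ) (s := {ω | X ω = true})
    (t := {ω | Y ω = true}) (hY (measurableSet_singleton true))
  rw [← ofPred_and, ← ofPred_or] at hunion
  simp only [Bool.or_eq_true]
  rw [← h.measureReal_and_eq]
  simp only [Bool.and_eq_true]
  linarith

end ProbabilityTheory.IndepFun

theorem linear_soundness {Ω : Type*} [MeasurableSpace Ω] (μ : Measure Ω)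
    [IsProbabilityMeasure μ]
    (ρ : ℕ → Ω → Bool) (hmeas : ∀ A, Measurable (ρ A))
    (hindep : iIndepFun ρ μ)
    (φ : Form) (hlin : φ.Linear) (c : ℕ → ℝ × ℝ)
    (hc : ∀ A, 0 ≤ (c A).1 ∧ 0 ≤ (c A).2 ∧ (c A).1 + (c A).2 ≤ 1)
    (hconf : ∀ A, (μ {ω | ρ A ω = true}).toReal ∈ Set.Icc (c A).1 (1 - (c A).2)) :
    (μ {ω | φ.eval ρ ω = true}).toReal ∈
      Set.Icc (φ.evalConf c).1 (1 - (φ.evalConf c).2) := by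
  induction φ with
  | atom A => exact hconf A
  | and φ ψ ihφ ihψ =>
    obtain ⟨hlinφ, hlinψ, hdisj⟩ := List.nodup_append'.mp hlin
    have hprob : μ.real {ω | (φ.and ψ).eval ρ ω = true} = _ :=
      (Form.indepFun_eval_of_disjoint hmeas hindep hdisj).measureReal_and_eq
    rw [← measureReal_def, hprob]
    exact mul_mem_Icc_confAnd (ihφ hlinφ) (ihψ hlinψ)
      (φ.evalConf_mem_confidences hc).1 (ψ.evalConf_mem_confidences hc).1
  | or φ ψ ihφ ihψ =>
    obtain ⟨hlinφ, hlinψ, hdisj⟩ := List.nodup_append'.mp hlin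
    have hprob : μ.real {ω | (φ.or ψ).eval ρ ω = true} = _ :=
      (Form.indepFun_eval_of_disjoint hmeas hindep hdisj).measureReal_or_eq
        (ψ.measurable_eval hmeas)
    rw [← measureReal_def, hprob]
    exact add_sub_mul_mem_Icc_confOr (ihφ hlinφ) (ihψ hlinψ)
      (φ.evalConf_mem_confidences hc).2.1 (ψ.evalConf_mem_confidences hc).2.1
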